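/- Let H be a finite simple graph, let w be a natural number, and let (T,(V_t)_{t∈V(T)}) be a tree decomposition of H of width at most w in which the number of nodes |V(T)| is minimum among all tree decompositions of H of width at most w. Then for every path t_1, t_2, …, t_m in T with m ≥ 2, the set (⋃_{i=2}^{m-1} V_{t_i}) \ (V_{t_1} ∪ V_{t_m}) contains at least m − w − 3 vertices of H. -/

import Mathlib

/-- A tree decomposition of a finite simple graph `H` on vertex type `V`:
a finite tree `T` on a node type `ι` together with bags `bag t ⊆ V` such that
every vertex is in some bag, every edge is contained in some bag, and whenever
a node `t₂` lies on the (unique) path in `T` between nodes `t₁` and `t₃`, we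
have `bag t₁ ∩ bag t₃ ⊆ bag t₂`. -/
structure TreeDecomp {V : Type} [Fintype V] [DecidableEq V] (H : SimpleGraph V) :
    Type 1 where
  ι : Type
  fin : Fintype ι
  T : SimpleGraph ι
  tree : T.IsTree
  bag : ι → Finset V
  cover_vertex : ∀ v : V, ∃ t, v ∈ bag t
  cover_edge : ∀ ⦃u v : V⦄, H.Adj u v → ∃ t, u ∈ bag t ∧ v ∈ bag t
  sep : ∀ ⦃t₁ t₂ t₃ : ι⦄ (p : T.Walk t₁ t₃), p.IsPath → t₂ ∈ p.support →
    bag t₁ ∩ bag t₃ ⊆ bag t₂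

attribute [instance] TreeDecomp.fin

namespace TDAux

open SimpleGraph
open scoped Classical

variable {V : Type} [Fintype V] [DecidableEq V] {H : SimpleGraph V}
  (D : TreeDecomp H) (s s' : D.ι) (hne : s' ≠ s)

/-- collapse `s` onto `s'`. -/
noncomputable def f : D.ι → {x : D.ι // x ≠ s} := fun x => if h : x = s then ⟨s', hne⟩ else ⟨x, h⟩

lemma f_s : f D s s' hne s = ⟨s', hne⟩ := dif_pos rfl

lemma f_of_ne {x : D.ι} (h : x ≠ s) : f D s s' hne x = ⟨x, h⟩ := dif_neg h

lemma f_val (a : {x : D.ι // x ≠ s}) : f D s s' hne a.val = a := by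
  rw [f_of_ne D s s' hne a.prop]

/-- the contracted graph. -/
def G : SimpleGraph {x : D.ι // x ≠ s} where
  Adj a b := a ≠ b ∧ ∃ x y, D.T.Adj x y ∧ f D s s' hne x = a ∧ f D s s' hne y = b
  symm := by
    constructor
    rintro a b ⟨hab, x, y, h, hx, hy⟩
    exact ⟨hab.symm, y, x, h.symm, hy, hx⟩
  loopless := ⟨fun a h => h.1 rfl⟩

lemma adj_cases {a b : {x : D.ι // x ≠ s}} (h : (G D s s' hne).Adj a b) :
    D.T.Adj a.val b.val ∨ (a.val = s' ∧ D.T.Adj s b.val) ∨ (b.val = s' ∧ D.T.Adj a.val s) := by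
  obtain ⟨hab, x, y, hxy, hx, hy⟩ := h
  by_cases hxs : x = s
  · rw [hxs] at hxy
    have hys : y ≠ s := hxy.ne'
    rw [hxs, f_s] at hx
    rw [f_of_ne D s s' hne hys] at hy
    subst hx; subst hy
    exact Or.inr (Or.inl ⟨rfl, hxy⟩)
  · by_cases hys : y = s
    · rw [hys] at hxy
      rw [hys, f_s] at hy
      rw [f_of_ne D s s' hne hxs] at hx
      subst hx; subst hy
      exact Or.inr (Or.inr ⟨rfl, hxy⟩)
    · rw [f_of_ne D s s' hne hxs] at hx
      rw [f_of_ne D s s' hne hys] at hy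
      subst hx; subst hy
      exact Or.inl hxy

/-- push a walk in `T` to a walk in the contracted graph. -/
lemma push : ∀ {x y : D.ι} (p : D.T.Walk x y),
    ∃ q : (G D s s' hne).Walk (f D s s' hne x) (f D s s' hne y),
      ∀ a ∈ q.support, ∃ b ∈ p.support, f D s s' hne b = a := by
  intro x y p
  induction p with
  | nil =>
    exact ⟨.nil, by simp⟩
  | @cons x x' y h p ih =>
    obtain ⟨q, hq⟩ := ih
    by_cases heq : f D s s' hne x = f D s s' hne x'
    · refine ⟨q.copy heq.symm rfl, ?_⟩
      intro a ha
      rw [SimpleGraph.Walk.support_copy] at ha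
      obtain ⟨b, hb, hfb⟩ := hq a ha
      exact ⟨b, by simp [hb], hfb⟩
    · refine ⟨SimpleGraph.Walk.cons ⟨heq, x, x', h, rfl, rfl⟩ q, ?_⟩
      intro a ha
      replace ha : a ∈ f D s s' hne x :: q.support := ha
      rcases List.mem_cons.mp ha with rfl | ha
      · exact ⟨x, by simp, rfl⟩
      · obtain ⟨b, hb, hfb⟩ := hq a ha
        exact ⟨b, by simp [hb], hfb⟩

/-- lift a walk in the contracted graph to a walk in `T`, with edge control. -/
lemma lift (hss : D.T.Adj s s') : ∀ {a b : {x : D.ι // x ≠ s}} (p : (G D s s' hne).Walk a b),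
    ∃ q : D.T.Walk a.val b.val, ∀ e ∈ q.edges,
      Sym2.map (f D s s' hne) e = s(⟨s', hne⟩, ⟨s', hne⟩) ∨ Sym2.map (f D s s' hne) e ∈ p.edges := by
  intro a b p
  induction p with
  | nil => exact ⟨.nil, by simp⟩
  | @cons a b c h p ih =>
    obtain ⟨q, hq⟩ := ih
    have htail : ∀ e ∈ q.edges,
        Sym2.map (f D s s' hne) e = s(⟨s', hne⟩, ⟨s', hne⟩) ∨
          Sym2.map (f D s s' hne) e ∈ (SimpleGraph.Walk.cons h p).edges := by
      intro e he
      rcases hq e he with h1 | h1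
      · exact Or.inl h1
      · exact Or.inr (by simp [h1])
    rcases adj_cases D s s' hne h with h1 | ⟨h1, h2⟩ | ⟨h1, h2⟩
    · refine ⟨SimpleGraph.Walk.cons h1 q, ?_⟩
      intro e he
      rw [SimpleGraph.Walk.edges_cons] at he
      rcases List.mem_cons.mp he with rfl | he
      · refine Or.inr ?_
        simp [Sym2.map_pair_eq, f_val]
      · exact htail e he
    · -- a.val = s', T.Adj s b.val
      have e1 : D.T.Adj a.val s := by rw [h1]; exact hss.symm
      refine ⟨SimpleGraph.Walk.cons e1 (SimpleGraph.Walk.cons h2 q), ?_⟩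
      intro e he
      rw [SimpleGraph.Walk.edges_cons, SimpleGraph.Walk.edges_cons] at he
      rcases List.mem_cons.mp he with rfl | he
      · refine Or.inl ?_
        have : f D s s' hne a.val = ⟨s', hne⟩ := by
          rw [f_val]; exact Subtype.ext h1
        simp [Sym2.map_pair_eq, this, f_s]
      · rcases List.mem_cons.mp he with rfl | he
        · refine Or.inr ?_
          have ha' : a = ⟨s', hne⟩ := Subtype.ext h1
          simp [Sym2.map_pair_eq, f_s, f_val, ← ha']
        · exact htail e he
    · -- b.val = s', T.Adj a.val s
      have e1 : D.T.Adj s b.val := by rw [h1]; exact hss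
      refine ⟨SimpleGraph.Walk.cons h2 (SimpleGraph.Walk.cons e1 q), ?_⟩
      intro e he
      rw [SimpleGraph.Walk.edges_cons, SimpleGraph.Walk.edges_cons] at he
      rcases List.mem_cons.mp he with rfl | he
      · refine Or.inr ?_
        have hb' : b = ⟨s', hne⟩ := Subtype.ext h1
        simp [Sym2.map_pair_eq, f_s, f_val, ← hb']
      · rcases List.mem_cons.mp he with rfl | he
        · refine Or.inl ?_
          have : f D s s' hne b.val = ⟨s', hne⟩ := by
            rw [f_val]; exact Subtype.ext h1
          simp [Sym2.map_pair_eq, this, f_s]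
        · exact htail e he

lemma G_isTree (hss : D.T.Adj s s') : (G D s s' hne).IsTree := by
  constructor
  · -- connected
    have : Nonempty {x : D.ι // x ≠ s} := ⟨⟨s', hne⟩⟩
    refine ⟨fun a b => ?_⟩
    obtain ⟨w⟩ := D.tree.isConnected.preconnected a.val b.val
    obtain ⟨q, -⟩ := push D s s' hne w
    exact ⟨(q.copy (f_val D s s' hne a) (f_val D s s' hne b))⟩
  · -- acyclic
    rw [SimpleGraph.isAcyclic_iff_forall_adj_isBridge]
    intro a b hab
    rw [SimpleGraph.isBridge_iff_adj_and_forall_walk_mem_edges]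
    refine fun p => ?_
    by_contra hnotmem
    obtain ⟨q, hq⟩ := lift D s s' hne hss p
    have hTbridge : ∀ ⦃x y : D.ι⦄, D.T.Adj x y → ∀ w : D.T.Walk x y, s(x, y) ∈ w.edges := by
      intro x y hxy w
      have := (SimpleGraph.isAcyclic_iff_forall_adj_isBridge.mp D.tree.IsAcyclic) hxy
      exact (SimpleGraph.isBridge_iff_adj_and_forall_walk_mem_edges.mp this) w
    have hmapab : ∀ e ∈ q.edges, Sym2.map (f D s s' hne) e ≠ s(a, b) := by
      intro e he hmap
      rcases hq e he with h1 | h1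
      · rw [hmap] at h1
        rw [Sym2.eq_iff] at h1
        have : a = b := by
          rcases h1 with ⟨h2, h3⟩ | ⟨h2, h3⟩ <;> rw [h2, h3]
        exact hab.1 this
      · rw [hmap] at h1
        exact hnotmem h1
    rcases adj_cases D s s' hne hab with h1 | ⟨h1, h2⟩ | ⟨h1, h2⟩
    · have := hTbridge h1 q
      refine hmapab _ this ?_
      simp [Sym2.map_pair_eq, f_val]
    · -- a.val = s', T.Adj s b.val
      have e0 : D.T.Adj s a.val := by rw [h1]; exact hss
      have := hTbridge h2 (SimpleGraph.Walk.cons e0 q)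
      rw [SimpleGraph.Walk.edges_cons] at this
      rcases List.mem_cons.mp this with heq | hmem
      · rw [Sym2.eq_iff] at heq
        rcases heq with ⟨-, h3⟩ | ⟨h3, h4⟩
        · exact hab.1 (Subtype.ext h3).symm
        · exact a.prop h3.symm
      · refine hmapab _ hmem ?_
        have ha' : a = ⟨s', hne⟩ := Subtype.ext h1
        simp [Sym2.map_pair_eq, f_s, f_val, ← ha']
    · -- b.val = s', T.Adj a.val s
      have e0 : D.T.Adj b.val s := by rw [h1]; exact hss.symm
      have := hTbridge h2 (q.append (SimpleGraph.Walk.cons e0 .nil))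
      rw [SimpleGraph.Walk.edges_append, SimpleGraph.Walk.edges_cons,
        SimpleGraph.Walk.edges_nil] at this
      rcases List.mem_append.mp this with hmem | heq
      · refine hmapab _ hmem ?_
        have hb' : b = ⟨s', hne⟩ := Subtype.ext h1
        simp [Sym2.map_pair_eq, f_s, f_val, ← hb']
      · rw [List.mem_singleton, Sym2.eq_iff] at heq
        rcases heq with ⟨h3, -⟩ | ⟨h3, -⟩
        · exact hab.1 (Subtype.ext h3)
        · exact a.prop h3

end TDAux

namespace TDAux2
open SimpleGraph TDAux
open scoped Classical

variable {V : Type} [Fintype V] [DecidableEq V] {H : SimpleGraph V}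
  (D : TreeDecomp H) (s s' : D.ι) (hne : s' ≠ s)

lemma mem_bag_f (hsub : D.bag s ⊆ D.bag s') {v : V} {x : D.ι} (hv : v ∈ D.bag x) :
    v ∈ D.bag (f D s s' hne x).val := by
  by_cases h : x = s
  · rw [h, f_s]; exact hsub (h ▸ hv)
  · rw [f_of_ne D s s' hne h]; exact hv

lemma G_sep (hss : D.T.Adj s s') (hsub : D.bag s ⊆ D.bag s') :
    ∀ ⦃t₁ t₂ t₃ : {x : D.ι // x ≠ s}⦄ (p : (G D s s' hne).Walk t₁ t₃), p.IsPath →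
      t₂ ∈ p.support → D.bag t₁.val ∩ D.bag t₃.val ⊆ D.bag t₂.val := by
  intro t₁ t₂ t₃ p hp hmem v hv
  obtain ⟨w⟩ := D.tree.isConnected.preconnected t₁.val t₃.val
  obtain ⟨q, hq⟩ := push D s s' hne w.bypass
  have hsupq : ∀ a ∈ (q.copy (f_val D s s' hne t₁) (f_val D s s' hne t₃)).support,
      v ∈ D.bag a.val := by
    intro a ha
    rw [SimpleGraph.Walk.support_copy] at ha
    obtain ⟨b, hb, hfb⟩ := hq a ha
    have hvb : v ∈ D.bag b := D.sep w.bypass w.bypass_isPath hb hv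
    rw [← hfb]
    exact mem_bag_f D s s' hne hsub hvb
  set q' := q.copy (f_val D s s' hne t₁) (f_val D s s' hne t₃) with hq'
  have huniq := (G_isTree D s s' hne hss).IsAcyclic.path_unique ⟨p, hp⟩ q'.toPath
  have hval : p = q'.bypass := congrArg Subtype.val huniq
  exact hsupq t₂ (q'.support_bypass_subset (hval ▸ hmem))

theorem not_bag_subset {w : ℕ}
    (hwidth : ∀ a : D.ι, (D.bag a).card ≤ w + 1)
    (hmin : ∀ D' : TreeDecomp H, (∀ a : D'.ι, (D'.bag a).card ≤ w + 1) →
      Fintype.card D.ι ≤ Fintype.card D'.ι)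
    (hss : D.T.Adj s s') : ¬ D.bag s ⊆ D.bag s' := by
  classical
  intro hsub
  have hne' : s' ≠ s := hss.ne'
  let D' : TreeDecomp H :=
    { ι := {x : D.ι // x ≠ s}
      fin := Subtype.fintype _
      T := G D s s' hne'
      tree := G_isTree D s s' hne' hss
      bag := fun a => D.bag a.val
      cover_vertex := fun v => by
        obtain ⟨x, hx⟩ := D.cover_vertex v
        exact ⟨f D s s' hne' x, mem_bag_f D s s' hne' hsub hx⟩
      cover_edge := fun u v huv => by
        obtain ⟨x, hx1, hx2⟩ := D.cover_edge huv
        exact ⟨f D s s' hne' x, mem_bag_f D s s' hne' hsub hx1,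
          mem_bag_f D s s' hne' hsub hx2⟩
      sep := G_sep D s s' hne' hss hsub }
  have h1 := hmin D' (fun a => hwidth a.val)
  have h2 : Fintype.card {x : D.ι // x ≠ s} < Fintype.card D.ι :=
    Fintype.card_subtype_lt (x := s) (by simp)
  have h3 : Fintype.card D'.ι = Fintype.card {x : D.ι // x ≠ s} :=
    Fintype.card_congr (Equiv.refl _)
  omega

end TDAux2

/-- Let `(T, bag)` be a tree decomposition of `H` of width at most `w` (every bag
has at most `w + 1` elements) with the minimum possible number of nodes among
all tree decompositions of `H` of width at most `w`.  Then for every path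
`t 0, t 1, …, t (m-1)` in the tree with `m ≥ 2`, the set of vertices covered by
the bags of interior nodes of the path but lying neither in the bag of the first
node nor in the bag of the last node has at least `m - w - 3` elements. -/
theorem interior_bags_card_lower_bound
    {V : Type} [Fintype V] [DecidableEq V] {H : SimpleGraph V}
    (w : ℕ) (D : TreeDecomp H)
    (hwidth : ∀ s : D.ι, (D.bag s).card ≤ w + 1)
    (hmin : ∀ D' : TreeDecomp H, (∀ s : D'.ι, (D'.bag s).card ≤ w + 1) →
      Fintype.card D.ι ≤ Fintype.card D'.ι)
    (m : ℕ) (hm : 2 ≤ m) (t : Fin m → D.ι)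
    (hinj : Function.Injective t)
    (hadj : ∀ i : ℕ, ∀ h : i + 1 < m,
      D.T.Adj (t ⟨i, by omega⟩) (t ⟨i + 1, h⟩)) :
    m - w - 3 ≤
      (((Finset.univ.filter fun i : Fin m => 0 < (i : ℕ) ∧ (i : ℕ) < m - 1).biUnion
          (fun i => D.bag (t i))) \
        (D.bag (t ⟨0, by omega⟩) ∪ D.bag (t ⟨m - 1, by omega⟩))).card := by
  classical
  have hadjF : ∀ j i : Fin m, (j : ℕ) + 1 = (i : ℕ) → D.T.Adj (t j) (t i) := by
    intro j i hji
    have h : (j : ℕ) + 1 < m := by omega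
    have h0 := hadj (j : ℕ) h
    have e1 : (⟨(j : ℕ), by omega⟩ : Fin m) = j := Fin.eta j _
    have e2 : (⟨(j : ℕ) + 1, h⟩ : Fin m) = i := Fin.ext hji
    rwa [e1, e2] at h0
  -- walks along segments of the path
  have seg : ∀ (d : ℕ) (j i : Fin m), (j : ℕ) + d = (i : ℕ) →
      ∃ p : D.T.Walk (t j) (t i), p.IsPath ∧
        (∀ a ∈ p.support, ∃ k : Fin m, j ≤ k ∧ k ≤ i ∧ a = t k) ∧
        (∀ k : Fin m, j ≤ k → k ≤ i → t k ∈ p.support) := by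
    intro d
    induction d with
    | zero =>
      intro j i hji
      have : j = i := Fin.ext (by omega)
      subst this
      refine ⟨.nil, SimpleGraph.Walk.IsPath.nil, ?_, ?_⟩
      · intro a ha
        rw [SimpleGraph.Walk.support_nil, List.mem_singleton] at ha
        exact ⟨j, le_refl _, le_refl _, ha⟩
      · intro k h1 h2
        have : k = j := le_antisymm h2 h1
        subst this
        simp [SimpleGraph.Walk.support_nil]
    | succ d ih =>
      intro j i hji
      have hj1 : (j : ℕ) + 1 < m := by omega
      set j' : Fin m := ⟨(j : ℕ) + 1, hj1⟩ with hj'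
      have hadj' : D.T.Adj (t j) (t j') := hadjF j j' rfl
      obtain ⟨q, hq1, hq2, hq3⟩ := ih j' i (by rw [hj']; show (j : ℕ) + 1 + d = (i : ℕ); omega)
      refine ⟨SimpleGraph.Walk.cons hadj' q, ?_, ?_, ?_⟩
      · rw [SimpleGraph.Walk.cons_isPath_iff]
        refine ⟨hq1, fun hmem => ?_⟩
        obtain ⟨k, hk1, hk2, hk3⟩ := hq2 _ hmem
        have hjk : j = k := hinj hk3
        have := congrArg Fin.val hjk
        rw [Fin.le_def] at hk1
        simp [hj'] at hk1
        omega
      · intro a ha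
        rw [SimpleGraph.Walk.support_cons] at ha
        rcases List.mem_cons.mp ha with rfl | ha
        · exact ⟨j, le_refl _, by rw [Fin.le_def]; omega, rfl⟩
        · obtain ⟨k, hk1, hk2, hk3⟩ := hq2 a ha
          refine ⟨k, ?_, hk2, hk3⟩
          rw [Fin.le_def] at hk1 ⊢
          simp [hj'] at hk1
          omega
      · intro k h1 h2
        rw [SimpleGraph.Walk.support_cons]
        by_cases hkj : k = j
        · subst hkj; exact List.mem_cons_self
        · refine List.mem_cons_of_mem _ (hq3 k ?_ h2)
          have hvk : (j : ℕ) ≠ (k : ℕ) := fun h => hkj (Fin.ext h.symm)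
          rw [Fin.le_def] at h1 ⊢
          simp [hj']
          omega
  -- the separation property along the path
  have hsep : ∀ (j i : Fin m), j < i →
      D.bag (t j) ∩ D.bag (t i) ⊆ D.bag (t ⟨(i : ℕ) - 1, by omega⟩) := by
    intro j i hji
    have hlt : (j : ℕ) < (i : ℕ) := Fin.lt_def.mp hji
    obtain ⟨p, hp, -, hmem⟩ := seg ((i : ℕ) - (j : ℕ)) j i (by omega)
    refine D.sep p hp (hmem ⟨(i : ℕ) - 1, by omega⟩ ?_ ?_)
    · rw [Fin.le_def]; show (j : ℕ) ≤ (i : ℕ) - 1; omega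
    · rw [Fin.le_def]; show (i : ℕ) - 1 ≤ (i : ℕ); omega
  -- each interior bag contributes a new vertex
  have hkey : ∀ i : Fin m, 0 < (i : ℕ) → (i : ℕ) < m - 1 →
      ∃ x : V, x ∈ D.bag (t i) ∧ ∀ j : Fin m, j < i → x ∉ D.bag (t j) := by
    intro i h0 h1
    have hadji : D.T.Adj (t i) (t ⟨(i : ℕ) - 1, by omega⟩) :=
      (hadjF ⟨(i : ℕ) - 1, by omega⟩ i (by simp; omega)).symm
    obtain ⟨x, hx1, hx2⟩ := Finset.not_subset.mp
      (TDAux2.not_bag_subset D (t i) (t ⟨(i : ℕ) - 1, by omega⟩) hwidth hmin hadji)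
    refine ⟨x, hx1, ?_⟩
    intro j hji hxj
    by_cases hj : (j : ℕ) = (i : ℕ) - 1
    · have hjp : j = ⟨(i : ℕ) - 1, by omega⟩ := Fin.ext hj
      exact hx2 (hjp ▸ hxj)
    · exact hx2 (hsep j i hji (Finset.mem_inter.mpr ⟨hxj, hx1⟩))
  -- counting
  set I : Finset (Fin m) :=
    Finset.univ.filter fun i : Fin m => 0 < (i : ℕ) ∧ (i : ℕ) < m - 1 with hI
  have hchoice : ∀ i : {x : Fin m // x ∈ I}, ∃ x : V,
      x ∈ D.bag (t i.val) ∧ ∀ j : Fin m, j < i.val → x ∉ D.bag (t j) := by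
    rintro ⟨i, hi⟩
    rw [hI, Finset.mem_filter] at hi
    exact hkey i hi.2.1 hi.2.2
  choose v hv1 hv2 using hchoice
  have hvinj : Function.Injective v := by
    intro a b hab
    by_contra hne2
    have hne3 : a.val ≠ b.val := fun h => hne2 (Subtype.ext h)
    rcases lt_or_gt_of_ne hne3 with h | h
    · exact hv2 b a.val h (hab ▸ hv1 a)
    · exact hv2 a b.val h (hab.symm ▸ hv1 b)
  set B0 := D.bag (t ⟨0, by omega⟩) with hB0
  set B1 := D.bag (t ⟨m - 1, by omega⟩) with hB1
  set S : Finset V := Finset.image v Finset.univ with hS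
  have hScard : S.card = I.card := by
    rw [hS, Finset.card_image_of_injective _ hvinj, Finset.card_univ, Fintype.card_coe]
  have hsub1 : S \ B1 ⊆ (I.biUnion fun i => D.bag (t i)) \ (B0 ∪ B1) := by
    intro x hx
    rw [Finset.mem_sdiff] at hx
    obtain ⟨hx1, hx2⟩ := hx
    rw [hS, Finset.mem_image] at hx1
    obtain ⟨a, -, rfl⟩ := hx1
    rw [Finset.mem_sdiff]
    constructor
    · rw [Finset.mem_biUnion]; exact ⟨a.val, a.prop, hv1 a⟩
    · rw [Finset.mem_union]
      rintro (h | h)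
      · have ha := (Finset.mem_filter.mp a.prop).2
        exact hv2 a ⟨0, by omega⟩ (by rw [Fin.lt_def]; exact ha.1) h
      · exact hx2 h
  have hIcard : I.card = m - 2 := by
    have himg : I.image Fin.val = Finset.Ioo 0 (m - 1) := by
      ext k
      simp only [hI, Finset.mem_image, Finset.mem_filter, Finset.mem_univ, true_and,
        Finset.mem_Ioo]
      constructor
      · rintro ⟨i, ⟨h1, h2⟩, rfl⟩; exact ⟨h1, h2⟩
      · rintro ⟨h1, h2⟩; exact ⟨⟨k, by omega⟩, ⟨h1, h2⟩, rfl⟩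
    have h := congrArg Finset.card himg
    rw [Finset.card_image_of_injective _ Fin.val_injective, Nat.card_Ioo] at h
    omega
  have h5 : S.card - B1.card ≤ ((I.biUnion fun i => D.bag (t i)) \ (B0 ∪ B1)).card :=
    le_trans (Finset.le_card_sdiff B1 S) (Finset.card_le_card hsub1)
  have h6 : B1.card ≤ w + 1 := hwidth _
  omega
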